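/- arXiv:1003.1553 — 3 statements merged into one kernel-verified Lean document; each statement's English description precedes it below -/
import Mathlib

section
/- For every integer k ≥ 2 and every positive integer i, the sum of the lattice points in the dilate iΔ_k of Δ_k = conv{(0,0),(0,1),(1,1),(k,0)} equals (i/12)·(2(k²+k+1)i² + 3(k²+k+2)i + k²+k+4, 2(k+2)i² + 12i + 8 − 2k). -/
open MeasureTheory Pointwise

/-- The Delzant polygon of the (k-1)-st Hirzebruch surface. -/
noncomputable def deltaK (k : ℤ) : Set (ℝ × ℝ) :=
  convexHull ℝ ({(0, 0), (0, 1), (1, 1), ((k : ℝ), 0)} : Set (ℝ × ℝ))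

/-- The lattice points of a subset of `ℝ × ℝ`. -/
def latPts (S : Set (ℝ × ℝ)) : Set (ℤ × ℤ) :=
  {p | ((p.1 : ℝ), (p.2 : ℝ)) ∈ S}

/-- The sum of the lattice points contained in a subset of `ℝ × ℝ`. -/
noncomputable def latSum (S : Set (ℝ × ℝ)) : ℝ × ℝ :=
  ∑ᶠ p ∈ latPts S, (((p.1 : ℝ), (p.2 : ℝ)) : ℝ × ℝ)

/-!
For `k ≥ 1` the polygon `Δ_k` is cut out by `x ≥ 0`, `0 ≤ y ≤ 1` and `x + (k - 1) y ≤ k`, so the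
lattice points of `iΔ_k` are the rows `y = b` for `0 ≤ b ≤ i`, the row `b` consisting of the points
`(a, b)` with `0 ≤ a ≤ ik - (k - 1) b`. Each row sum is a quadratic polynomial in `b`, and a
quadratic summed over `0, …, N` telescopes to a cubic in `N`.
-/

open Finset

theorem sum_Icc_zero_sub {M : Type*} [AddCommGroup M] (F : ℤ → M) {N : ℤ} (hN : -1 ≤ N) :
    ∑ a ∈ Icc 0 N, (F a - F (a - 1)) = F N - F (-1) := by
  induction N, hN using Int.leInduction with
  | base => simp
  | succ N hN ih =>
    rw [← insert_Icc_right_eq_Icc_add_one (by omega), sum_insert (by simp), ih,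
      add_sub_cancel_right]
    abel

theorem sum_Icc_zero_quadratic (c₂ c₁ c₀ : ℝ) {f : ℤ → ℝ}
    (hf : ∀ a, f a = c₂ * a ^ 2 + c₁ * a + c₀) {N : ℤ} (hN : -1 ≤ N) :
    ∑ a ∈ Icc 0 N, f a =
      c₂ * (N * (N + 1) * (2 * N + 1) / 6) + c₁ * (N * (N + 1) / 2) + c₀ * (N + 1) := by
  let F : ℤ → ℝ := fun n =>
    c₂ * (n * (n + 1) * (2 * n + 1) / 6) + c₁ * (n * (n + 1) / 2) + c₀ * (n + 1)
  calc ∑ a ∈ Icc 0 N, f a = ∑ a ∈ Icc 0 N, (F a - F (a - 1)) :=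
        sum_congr rfl fun a _ => by simp only [F, hf]; push_cast; ring
    _ = F N - F (-1) := sum_Icc_zero_sub F hN
    _ = _ := by simp [F]

theorem finsum_mem_eq_sum_sum {α γ M : Type*} [AddCommMonoid M]
    {S : Set (α × γ)} (s : Finset γ) (t : γ → Finset α)
    (hS : ∀ p, p ∈ S ↔ p.2 ∈ s ∧ p.1 ∈ t p.2) (f : α × γ → M) :
    ∑ᶠ p ∈ S, f p = ∑ c ∈ s, ∑ a ∈ t c, f (a, c) := by
  classical
  have hr : ∀ p, p ∈ s.biUnion (fun c => t c ×ˢ {c}) ↔ p.2 ∈ s ∧ p.1 ∈ t p.2 := by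
    rintro ⟨a, c⟩
    simp [and_comm]
  rw [show S = ↑(s.biUnion fun c => t c ×ˢ {c}) from Set.ext fun p => (hS p).trans (hr p).symm,
    finsum_mem_coe_finset, sum_finset_product_right _ s t hr]

theorem deltaK_eq (k : ℤ) (hk : 1 ≤ k) :
    deltaK k = {p : ℝ × ℝ | 0 ≤ p.1 ∧ 0 ≤ p.2 ∧ p.2 ≤ 1 ∧ p.1 + (k - 1) * p.2 ≤ k} := by
  have hk : (1 : ℝ) ≤ k := by exact_mod_cast hk
  apply subset_antisymm
  · refine convexHull_min ?_ ?_
    · rintro p (rfl | rfl | rfl | rfl) <;> simp <;> linarith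
    · rintro p ⟨hp₁, hp₂, hp₃, hp₄⟩ q ⟨hq₁, hq₂, hq₃, hq₄⟩ a b ha hb hab
      refine ⟨?_, ?_, ?_, ?_⟩ <;>
        simp only [Prod.fst_add, Prod.snd_add, Prod.smul_fst, Prod.smul_snd, smul_eq_mul] <;>
        nlinarith
  · rintro ⟨x, y⟩ ⟨hx, hy₀, hy₁, hxy⟩
    set R : ℝ := k - (k - 1) * y
    have hR : 0 < R := by nlinarith
    -- `(x, y)` lies on the horizontal chord from edge `[(0,0), (0,1)]` to edge `[(k,0), (1,1)]`.
    have hleft : ((0 : ℝ), y) ∈ deltaK k :=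
      segment_subset_convexHull (x := (0, 0)) (y := (0, 1)) (by simp) (by simp)
        ⟨1 - y, y, by linarith, hy₀, by ring, by ext <;> simp⟩
    have hright : (R, y) ∈ deltaK k :=
      segment_subset_convexHull (x := ((k : ℝ), 0)) (y := (1, 1)) (by simp) (by simp)
        ⟨1 - y, y, by linarith, hy₀, by ring, by ext <;> simp [R]; ring⟩
    refine (convex_convexHull ℝ _).segment_subset hleft hright
      ⟨1 - x / R, x / R, ?_, by positivity, by ring, ?_⟩
    · rw [sub_nonneg, div_le_one hR]; linarith
    · ext
      · simp [div_mul_cancel₀ _ hR.ne']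
      · simp only [Prod.snd_add, Prod.smul_snd, smul_eq_mul]; ring

theorem mem_smul_deltaK {k : ℤ} (hk : 1 ≤ k) {t : ℝ} (ht : 0 < t) (p : ℝ × ℝ) :
    p ∈ t • deltaK k ↔ 0 ≤ p.1 ∧ 0 ≤ p.2 ∧ p.2 ≤ t ∧ p.1 + (k - 1) * p.2 ≤ k * t := by
  rw [Set.mem_smul_set_iff_inv_smul_mem₀ ht.ne', deltaK_eq k hk]
  simp only [Set.mem_ofPred_eq, Prod.smul_fst, Prod.smul_snd, smul_eq_mul, mul_left_comm _ t⁻¹,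
    ← mul_add, inv_mul_le_iff₀ ht, mul_nonneg_iff_of_pos_left (inv_pos.2 ht), one_mul,
    mul_comm t]

theorem mem_latPts_smul_deltaK {k : ℤ} (hk : 1 ≤ k) {i : ℕ} (hi : 0 < i) (p : ℤ × ℤ) :
    p ∈ latPts ((i : ℝ) • deltaK k) ↔
      p.2 ∈ Icc 0 (i : ℤ) ∧ p.1 ∈ Icc 0 (i * k - (k - 1) * p.2) := by
  simp only [latPts, Set.mem_ofPred_eq, mem_smul_deltaK hk (Nat.cast_pos.2 hi), mem_Icc]
  norm_cast
  constructor
  · rintro ⟨h₁, h₂, h₃, h₄⟩; exact ⟨⟨h₂, h₃⟩, h₁, by linarith⟩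
  · rintro ⟨⟨h₂, h₃⟩, h₁, h₄⟩; exact ⟨h₁, h₂, h₃, by linarith⟩

theorem latSum_dilate_deltaK (k : ℤ) (hk : 2 ≤ k) (i : ℕ) (hi : 1 ≤ i) :
    latSum ((i : ℝ) • deltaK k) =
      ((i : ℝ) / 12) •
        ((2 * ((k : ℝ) ^ 2 + k + 1) * (i : ℝ) ^ 2 + 3 * ((k : ℝ) ^ 2 + k + 2) * (i : ℝ)
            + (k : ℝ) ^ 2 + k + 4,
          2 * ((k : ℝ) + 2) * (i : ℝ) ^ 2 + 12 * (i : ℝ) + 8 - 2 * (k : ℝ)) : ℝ × ℝ) := by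
  have hN : ∀ b ∈ Icc 0 (i : ℤ), -1 ≤ i * k - (k - 1) * b := by
    intro b hb
    rw [mem_Icc] at hb
    nlinarith
  rw [latSum, finsum_mem_eq_sum_sum _ (fun b => Icc 0 (i * k - (k - 1) * b))
    (mem_latPts_smul_deltaK (by omega : 1 ≤ k) hi)]
  ext
  · simp only [Prod.fst_sum, Prod.smul_fst, smul_eq_mul]
    rw [sum_congr rfl fun b hb => sum_Icc_zero_quadratic 0 1 0 (fun a => by ring) (hN b hb)]
    -- the row sum `N (N + 1) / 2`, with `N = ik - (k - 1) b`, as a quadratic in `b`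
    rw [sum_Icc_zero_quadratic (((k : ℝ) - 1) ^ 2 / 2) (-((k - 1) * (2 * i * k + 1) / 2))
      (i * k * (i * k + 1) / 2) (fun b => by push_cast; ring) (by omega)]
    push_cast
    ring
  · simp only [Prod.snd_sum, Prod.smul_snd, smul_eq_mul]
    rw [sum_congr rfl fun (b : ℤ) hb =>
      sum_Icc_zero_quadratic 0 0 (b : ℝ) (fun a => by ring) (hN b hb)]
    rw [sum_Icc_zero_quadratic (-((k : ℝ) - 1)) (i * k + 1) 0 (fun b => by push_cast; ring)
      (by omega)]
    push_cast
    ring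
end

section
/- Let G be a torus (ℂ^×)ⁿ acting linearly on a finite-dimensional complex vector space V, with weight decomposition V = ⊕_{χ} V_χ. A nonzero vector v ∈ V is G-semistable (i.e., the closure of the orbit G·v does not contain 0) if and only if the weight polytope Wt_G(v), the convex hull in ℝⁿ of the characters χ with v_χ ≠ 0, contains the origin. -/
/-!
If `0 = ∑ aᵢ χᵢ` is a convex combination of weights of `v`, then `u ↦ ∏ ‖u_{χᵢ}‖ ^ aᵢ` is a
continuous function that is constant on the orbit (the torus acts on `‖u_χ‖` through
`∏ ‖t_m‖ ^ χ_m`), positive at `v` and zero at `0`; so `0` is not in the orbit closure.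
Conversely, if `0` is not in the weight polytope, a hyperplane separates it from the weights,
i.e. some `l ∈ ℝⁿ` pairs positively with every weight of `v`, and along the one-parameter
subgroup `s ↦ (exp (l_m s))_m` every coordinate of `v` tends to `0` as `s → -∞`.
-/

open Finset Filter Topology

theorem exists_forall_pos_sum_mul_of_zero_notMem_convexHull {σ : Type*} [Fintype σ]
    {S : Set (σ → ℝ)} (hS : S.Finite) (h : 0 ∉ convexHull ℝ S) :
    ∃ l : σ → ℝ, ∀ x ∈ S, 0 < ∑ m, x m * l m := by
  classical
  obtain ⟨f, u, hu, hf⟩ :=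
    geometric_hahn_banach_point_closed (convex_convexHull ℝ S) (hS.isClosed_convexHull (𝕜 := ℝ)) h
  refine ⟨fun m => f (Pi.single m 1), fun x hx => ?_⟩
  have hfx : f x = ∑ m, x m * f (Pi.single m 1) := by
    conv_lhs => rw [pi_eq_sum_univ' x]
    simp [map_sum]
  rw [← hfx, ← map_zero f]
  exact hu.trans (hf x (subset_convexHull ℝ S hx))

section TorusOrbit

variable {ι σ : Type*} [Fintype σ]

def torusOrbit (w : ι → σ → ℤ) (v : ι → ℂ) : Set (ι → ℂ) :=
  {u | ∃ t : σ → ℂˣ, u = fun j => (∏ m, ((t m : ℂ) ^ (w j m))) * v j}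

theorem prod_norm_prod_zpow_rpow_eq_one {κ : Type*} [Fintype κ] (e : κ → σ → ℤ) (a : κ → ℝ)
    (he : ∑ i, a i • (fun m => (e i m : ℝ)) = 0) (t : σ → ℂˣ) :
    ∏ i, ‖∏ m, (t m : ℂ) ^ e i m‖ ^ a i = 1 := by
  have ht (m : σ) : 0 < ‖(t m : ℂ)‖ := norm_pos_iff.2 (t m).ne_zero
  calc ∏ i, ‖∏ m, (t m : ℂ) ^ e i m‖ ^ a i
      = ∏ i, ∏ m, ‖(t m : ℂ)‖ ^ (a i * e i m) := by
        refine prod_congr rfl fun i _ => ?_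
        rw [norm_prod, ← Real.finsetProd_rpow _ _ fun m _ => norm_nonneg _]
        refine prod_congr rfl fun m _ => ?_
        rw [norm_zpow, ← Real.rpow_intCast, ← Real.rpow_mul (ht m).le, mul_comm]
    _ = ∏ m, ‖(t m : ℂ)‖ ^ (∑ i, a i * e i m) := by
        rw [Finset.prod_comm]
        exact prod_congr rfl fun m _ => (Real.rpow_sum_of_pos (ht m) _ _).symm
    _ = 1 := by
        refine prod_eq_one fun m _ => ?_
        have hm := congrFun he m
        simp only [Finset.sum_apply, Pi.smul_apply, smul_eq_mul, Pi.zero_apply] at hm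
        rw [hm, Real.rpow_zero]

theorem zero_notMem_closure_torusOrbit_of_sum_smul_eq_zero {κ : Type*} [Fintype κ]
    (w : ι → σ → ℤ) (v : ι → ℂ) (φ : κ → ι) (a : κ → ℝ) (ha₀ : 0 ≤ a) (ha : a ≠ 0)
    (hφ : ∀ i, v (φ i) ≠ 0) (hw : ∑ i, a i • (fun m => (w (φ i) m : ℝ)) = 0) :
    (0 : ι → ℂ) ∉ closure (torusOrbit w v) := by
  set Φ : (ι → ℂ) → ℝ := fun u => ∏ i, ‖u (φ i)‖ ^ a i
  have hΦ : Continuous Φ := continuous_finsetProd _ fun i _ =>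
    (Real.continuous_rpow_const (ha₀ i)).comp (continuous_apply _).norm
  have horbit : torusOrbit w v ⊆ Φ ⁻¹' {Φ v} := by
    rintro _ ⟨t, rfl⟩
    simp only [Set.mem_preimage, Set.mem_singleton_iff, Φ, norm_mul,
      Real.mul_rpow (norm_nonneg _) (norm_nonneg _), prod_mul_distrib,
      prod_norm_prod_zpow_rpow_eq_one (fun i => w (φ i)) a hw t, one_mul]
  have hΦ0 : Φ 0 = 0 := by
    obtain ⟨i, hi⟩ := Function.ne_iff.1 ha
    exact prod_eq_zero (mem_univ i) (by simp [Real.zero_rpow hi])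
  have hΦv : Φ v ≠ 0 :=
    prod_ne_zero_iff.2 fun i _ => (Real.rpow_pos_of_pos (norm_pos_iff.2 (hφ i)) _).ne'
  intro h
  have : Φ 0 = Φ v := closure_minimal horbit (isClosed_singleton.preimage hΦ) h
  exact hΦv (this.symm.trans hΦ0)

theorem prod_exp_zpow (x : σ → ℂ) (e : σ → ℤ) :
    ∏ m, Complex.exp (x m) ^ e m = Complex.exp (∑ m, e m * x m) := by
  simp [Complex.exp_sum, Complex.exp_int_mul]

theorem zero_mem_closure_torusOrbit_of_forall_pos (w : ι → σ → ℤ) (v : ι → ℂ) (l : σ → ℝ)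
    (hl : ∀ j, v j ≠ 0 → 0 < ∑ m, w j m * l m) :
    (0 : ι → ℂ) ∈ closure (torusOrbit w v) := by
  let γ (s : ℝ) (m : σ) : ℂˣ := Units.mk0 (Complex.exp (l m * s)) (Complex.exp_ne_zero _)
  refine mem_closure_of_tendsto (b := atBot)
    (f := fun s j => (∏ m, ((γ s m : ℂ) ^ (w j m))) * v j) ?_ (.of_forall fun s => ⟨γ s, rfl⟩)
  refine tendsto_pi_nhds.2 fun j => ?_
  by_cases hj : v j = 0
  · simp [hj]
  have hγ (s : ℝ) : ∏ m, (γ s m : ℂ) ^ w j m = Real.exp ((∑ m, w j m * l m) * s) := by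
    simp only [γ, Units.val_mk0, prod_exp_zpow, Complex.ofReal_exp]
    push_cast
    simp only [sum_mul, mul_assoc]
  have hexp : Tendsto (fun s => Real.exp ((∑ m, w j m * l m) * s)) atBot (𝓝 0) :=
    Real.tendsto_exp_atBot.comp (tendsto_id.const_mul_atBot (hl j hj))
  simpa only [hγ, Function.comp_def, Complex.ofReal_zero, zero_mul, Pi.zero_apply] using
    ((Complex.continuous_ofReal.tendsto 0).comp hexp).mul_const (v j)

end TorusOrbit

theorem torus_semistable_iff_zero_mem_weight_polytope_general
    (n : ℕ) (ι : Type) [Fintype ι] (w : ι → Fin n → ℤ) (v : ι → ℂ) :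
    ((0 : ι → ℂ) ∉
        closure {u : ι → ℂ | ∃ t : Fin n → ℂˣ,
          u = fun j => (∏ m, ((t m : ℂ) ^ (w j m))) * v j}) ↔
      (0 : Fin n → ℝ) ∈
        convexHull ℝ {x : Fin n → ℝ | ∃ j, v j ≠ 0 ∧ x = fun m => ((w j m : ℝ))} := by
  change 0 ∉ closure (torusOrbit w v) ↔ _
  constructor
  · intro hss
    by_contra hhull
    have hfin : {x : Fin n → ℝ | ∃ j, v j ≠ 0 ∧ x = fun m => ((w j m : ℝ))}.Finite :=
      (Set.finite_range fun j m => (w j m : ℝ)).subset (by rintro _ ⟨j, -, rfl⟩; exact ⟨j, rfl⟩)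
    obtain ⟨l, hl⟩ := exists_forall_pos_sum_mul_of_zero_notMem_convexHull hfin hhull
    exact hss (zero_mem_closure_torusOrbit_of_forall_pos w v l fun j hj => hl _ ⟨j, hj, rfl⟩)
  · intro hhull
    obtain ⟨κ, _, a, z, ha₀, ha₁, hz, hsum⟩ := mem_convexHull_iff_exists_fintype.1 hhull
    choose φ hφ hzφ using hz
    obtain rfl : z = fun i m => (w (φ i) m : ℝ) := funext hzφ
    have ha : a ≠ 0 := by rintro rfl; simp at ha₁
    exact zero_notMem_closure_torusOrbit_of_sum_smul_eq_zero w v φ a ha₀ ha hφ hsum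

/-- For a linear action of the torus `(ℂ^×)ⁿ` on a finite-dimensional vector space,
written in a basis of weight vectors (indexed by a finite type `ι`, with weights
`w : ι → ℤⁿ`, a point `t` of the torus acting on the `j`-th coordinate by the character
`t ↦ ∏ m, t_m ^ (w j m)`), a nonzero vector `v` is semistable (the origin is not in the
closure of its orbit) iff the weight polytope, the convex hull of the weights `w j` with
`v j ≠ 0`, contains the origin. -/
theorem torus_semistable_iff_zero_mem_weight_polytope
    (n : ℕ) (ι : Type) [Fintype ι] (w : ι → Fin n → ℤ) (v : ι → ℂ) (hv : v ≠ 0) :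
    ((0 : ι → ℂ) ∉
        closure {u : ι → ℂ | ∃ t : Fin n → ℂˣ,
          u = fun j => (∏ m, ((t m : ℂ) ^ (w j m))) * v j}) ↔
      (0 : Fin n → ℝ) ∈
        convexHull ℝ {x : Fin n → ℝ | ∃ j, v j ≠ 0 ∧ x = fun m => ((w j m : ℝ))} :=
  torus_semistable_iff_zero_mem_weight_polytope_general n ι w v
end

section
/- For Δ₂ = conv{(0,0),(0,1),(1,1),(2,0)} ⊂ ℝ² (the polytope of the one-point blow-up of ℙ²), the obstruction vectors F_{Δ₂,1} and F_{Δ₂,2} are both equal to (1/12)·(1, −2); in particular they are nonzero and span the line ℂ·(1,−2) ⊂ ℂ². -/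
/-
The hypotheses say that the number and the sum of the lattice points of `i • Δ₂` are
polynomials in `i` with coefficients `vol Δ₂, E₁, E₀` and `∫ x, s₂, s₁` (after dividing the
sum by `i`). Both are polynomials of degree at most two, hence determined by their values
at `i = 1, 2, 3`. Counting the lattice points of `Δ₂, 2Δ₂, 3Δ₂` (5, 12 and 22 of them, with
sums `(4, 2), (19, 10), (52, 28)`) gives `vol Δ₂ = 3/2`, `E₁ = 5/2`, `E₀ = 1`,
`∫ x = (7/6, 2/3)`, `s₂ = (2, 1)`, `s₁ = (5/6, 1/3)`, and both obstruction vectors come out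
as `(1/12) • (1, -2)`.
-/

open MeasureTheory Pointwise

/-- The Delzant polygon of the one-point blow-up of the projective plane. -/
noncomputable def delta2 : Set (ℝ × ℝ) :=
  convexHull ℝ ({(0, 0), (0, 1), (1, 1), (2, 0)} : Set (ℝ × ℝ))

theorem quadratic_coeffs_eq_of_eval_eq {K M : Type*} [Field K] [CharZero K] [AddCommGroup M]
    [Module K M] {a b c a' b' c' : M}
    (h : ∀ i ∈ ({1, 2, 3} : Finset ℕ),
      (i : K) ^ 2 • a + (i : K) • b + c = (i : K) ^ 2 • a' + (i : K) • b' + c') :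
    a = a' ∧ b = b' ∧ c = c' := by
  have h₁ := h 1 (by simp)
  have h₂ := h 2 (by simp)
  have h₃ := h 3 (by simp)
  push_cast at h₁ h₂ h₃
  refine ⟨?_, ?_, ?_⟩
  · linear_combination (norm := module) (2⁻¹ : K) • (h₁ - (2 : K) • h₂ + h₃)
  · linear_combination (norm := module) (2⁻¹ : K) • ((-5 : K) • h₁ + (8 : K) • h₂ - (3 : K) • h₃)
  · linear_combination (norm := module) (3 : K) • h₁ - (3 : K) • h₂ + h₃

theorem delta2_eq_setOf :
    delta2 = {p : ℝ × ℝ | 0 ≤ p.1 ∧ 0 ≤ p.2 ∧ p.2 ≤ 1 ∧ p.1 + p.2 ≤ 2} := by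
  apply subset_antisymm
  · refine convexHull_min ?_ ?_
    · simp only [Set.insert_subset_iff, Set.singleton_subset_iff, Set.mem_ofPred_eq]
      norm_num
    · exact (convex_halfSpace_ge (LinearMap.fst ℝ ℝ ℝ).isLinear 0).inter <|
        (convex_halfSpace_ge (LinearMap.snd ℝ ℝ ℝ).isLinear 0).inter <|
        (convex_halfSpace_le (LinearMap.snd ℝ ℝ ℝ).isLinear 1).inter <|
        convex_halfSpace_le (LinearMap.fst ℝ ℝ ℝ + LinearMap.snd ℝ ℝ ℝ).isLinear 2
  · rintro ⟨x, y⟩ ⟨hx, hy, hy₁, hxy⟩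
    -- `b` is the weight of the vertex `(1, 1)`: just large enough that `(0, 0)` gets weight `≥ 0`.
    set b := max (x + 2 * y - 2) 0
    have hb₀ : 0 ≤ b := le_max_right _ _
    have hbx : b ≤ x := max_le (by linarith) hx
    have hby : b ≤ y := max_le (by linarith) hy
    have hb : x + 2 * y - 2 ≤ b := le_max_left _ _
    let w : Fin 4 → ℝ := ![1 - y - (x - b) / 2, y - b, b, (x - b) / 2]
    let v : Fin 4 → ℝ × ℝ := ![(0, 0), (0, 1), (1, 1), (2, 0)]
    have hcomb : ((x, y) : ℝ × ℝ) = ∑ i, w i • v i := by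
      simp [w, v, Fin.sum_univ_four]
    rw [hcomb]
    refine (convex_convexHull ℝ _).sum_mem (fun i _ => ?_) ?_ (fun i _ => subset_convexHull ℝ _ ?_)
    · fin_cases i <;> simp [w] <;> linarith
    · simp only [Fin.sum_univ_four, w, Matrix.cons_val_zero, Matrix.cons_val_one,
        Matrix.cons_val]
      ring
    · fin_cases i <;> simp [v]

theorem smul_delta2 {c : ℝ} (hc : 0 < c) :
    c • delta2 = {p : ℝ × ℝ | 0 ≤ p.1 ∧ 0 ≤ p.2 ∧ p.2 ≤ c ∧ p.1 + p.2 ≤ 2 * c} := by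
  ext p
  rw [delta2_eq_setOf, Set.mem_smul_set_iff_inv_smul_mem₀ hc.ne']
  simp only [Set.mem_ofPred_eq, Prod.smul_fst, Prod.smul_snd, smul_eq_mul, ← mul_add,
    mul_nonneg_iff_of_pos_left (inv_pos.2 hc), inv_mul_le_iff₀ hc, mul_one]
  rw [mul_comm c]

-- `noncomputable` only because elaboration routes the order on `ℤ` through
-- `Int.instConditionallyCompleteLinearOrder`; the kernel still evaluates it for `decide`.
noncomputable def delta2LatticeFinset (n : ℕ) : Finset (ℤ × ℤ) :=
  (Finset.Icc 0 (2 * n : ℤ) ×ˢ Finset.Icc 0 (n : ℤ)).filter fun q => q.1 + q.2 ≤ 2 * n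

theorem latPts_natCast_smul_delta2 {n : ℕ} (hn : 0 < n) :
    latPts ((n : ℝ) • delta2) = delta2LatticeFinset n := by
  ext q
  rw [latPts, Set.mem_ofPred_eq, smul_delta2 (Nat.cast_pos.2 hn), delta2LatticeFinset]
  simp only [Set.mem_ofPred_eq, Finset.coe_filter, Finset.mem_product, Finset.mem_Icc]
  norm_cast
  omega

theorem card_delta2LatticeFinset : ∀ i ∈ ({1, 2, 3} : Finset ℕ),
    (delta2LatticeFinset i).card * 2 = 3 * i ^ 2 + 5 * i + 2 := by
  decide

theorem sum_delta2LatticeFinset : ∀ i ∈ ({1, 2, 3} : Finset ℕ),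
    (∑ q ∈ delta2LatticeFinset i, q.1) * 6 = 7 * i ^ 3 + 12 * i ^ 2 + 5 * i ∧
      (∑ q ∈ delta2LatticeFinset i, q.2) * 3 = 2 * i ^ 3 + 3 * i ^ 2 + i := by
  decide

theorem ncard_latPts_smul_delta2 : ∀ i ∈ ({1, 2, 3} : Finset ℕ),
    ((latPts ((i : ℝ) • delta2)).ncard : ℝ) = 3 / 2 * i ^ 2 + 5 / 2 * i + 1 := by
  intro i hi
  have hcard : ((delta2LatticeFinset i).card : ℝ) * 2 = 3 * i ^ 2 + 5 * i + 2 := by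
    exact_mod_cast card_delta2LatticeFinset i hi
  rw [latPts_natCast_smul_delta2 (by simp at hi; omega), Set.ncard_coe_finset]
  linarith

theorem latSum_smul_delta2 : ∀ i ∈ ({1, 2, 3} : Finset ℕ),
    latSum ((i : ℝ) • delta2) =
      (i : ℝ) • ((i : ℝ) ^ 2 • ((7 / 6 : ℝ), (2 / 3 : ℝ)) + (i : ℝ) • ((2 : ℝ), (1 : ℝ)) +
        ((5 / 6 : ℝ), (1 / 3 : ℝ))) := by
  intro i hi
  obtain ⟨h₁, h₂⟩ := sum_delta2LatticeFinset i hi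
  have h₁' : (∑ q ∈ delta2LatticeFinset i, (q.1 : ℝ)) * 6 = 7 * i ^ 3 + 12 * i ^ 2 + 5 * i := by
    exact_mod_cast h₁
  have h₂' : (∑ q ∈ delta2LatticeFinset i, (q.2 : ℝ)) * 3 = 2 * i ^ 3 + 3 * i ^ 2 + i := by
    exact_mod_cast h₂
  rw [latSum, latPts_natCast_smul_delta2 (by simp at hi; omega), finsum_mem_coe_finset]
  ext
  · simp only [Prod.fst_sum, Prod.smul_fst, Prod.fst_add, smul_eq_mul]
    linarith
  · simp only [Prod.snd_sum, Prod.smul_snd, Prod.snd_add, smul_eq_mul]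
    linarith

/-- The obstruction vectors `F_{Δ₂,1}` and `F_{Δ₂,2}` of the one-point blow-up of `ℙ²`
both equal `(1/12) • (1, -2)`; in particular they are nonzero, and they span the line
`ℝ • (1,-2)`. -/
theorem obstruction_delta2
    (E₀ E₁ : ℝ)
    (hE : ∀ i : ℕ, 1 ≤ i →
      (volume delta2).toReal * (i : ℝ) ^ 2 + E₁ * (i : ℝ) + E₀ =
        ((latPts ((i : ℝ) • delta2)).ncard : ℝ))
    (s₁ s₂ : ℝ × ℝ)
    (hs : ∀ i : ℕ, 1 ≤ i →
      (i : ℝ) ^ 3 • (∫ x in delta2, x) + (i : ℝ) ^ 2 • s₂ + (i : ℝ) • s₁ =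
        latSum ((i : ℝ) • delta2)) :
    (volume delta2).toReal • s₁ - E₀ • (∫ x in delta2, x) =
        ((1 : ℝ) / 12) • ((1, -2) : ℝ × ℝ) ∧
      (volume delta2).toReal • s₂ - E₁ • (∫ x in delta2, x) =
        ((1 : ℝ) / 12) • ((1, -2) : ℝ × ℝ) ∧
      (volume delta2).toReal • s₁ - E₀ • (∫ x in delta2, x) ≠ 0 ∧
      Submodule.span ℝ
          ({(volume delta2).toReal • s₁ - E₀ • (∫ x in delta2, x),
            (volume delta2).toReal • s₂ - E₁ • (∫ x in delta2, x)} : Set (ℝ × ℝ)) =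
        Submodule.span ℝ ({((1, -2) : ℝ × ℝ)} : Set (ℝ × ℝ)) := by
  have one_le_of_mem {i : ℕ} (hi : i ∈ ({1, 2, 3} : Finset ℕ)) : 1 ≤ i := by simp at hi; omega
  obtain ⟨hV, hE₁, hE₀⟩ : (volume delta2).toReal = 3 / 2 ∧ E₁ = 5 / 2 ∧ E₀ = 1 :=
    quadratic_coeffs_eq_of_eval_eq (K := ℝ) fun i hi => by
      simp only [smul_eq_mul]
      linear_combination hE i (one_le_of_mem hi) + ncard_latPts_smul_delta2 i hi
  obtain ⟨hM, hs₂, hs₁⟩ :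
      ∫ x in delta2, x = ((7 / 6 : ℝ), (2 / 3 : ℝ)) ∧ s₂ = (2, 1) ∧ s₁ = (5 / 6, 1 / 3) :=
    quadratic_coeffs_eq_of_eval_eq fun i hi =>
      smul_right_injective (M := ℝ × ℝ) (r := (i : ℝ))
        (Nat.cast_ne_zero.2 (Nat.one_le_iff_ne_zero.1 (one_le_of_mem hi))) <| by
        dsimp only
        rw [← latSum_smul_delta2 i hi, ← hs i (one_le_of_mem hi)]
        module
  have hF₁ : (volume delta2).toReal • s₁ - E₀ • (∫ x in delta2, x) =
      ((1 : ℝ) / 12) • ((1, -2) : ℝ × ℝ) := by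
    rw [hV, hE₀, hM, hs₁]
    norm_num [Prod.ext_iff]
  have hF₂ : (volume delta2).toReal • s₂ - E₁ • (∫ x in delta2, x) =
      ((1 : ℝ) / 12) • ((1, -2) : ℝ × ℝ) := by
    rw [hV, hE₁, hM, hs₂]
    norm_num [Prod.ext_iff]
  rw [hF₁, hF₂, Set.pair_eq_singleton]
  exact ⟨rfl, rfl, by norm_num [Prod.ext_iff], Submodule.span_singleton_smul_eq (by norm_num) _⟩
end
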